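/- Let φ₁(q,t) = −Σ_{j≥0} t^j q^{binomial(j,2)} and let φ₂(q,t) ∈ ℤ[[q,t]] be the unique solution of φ₂(q,t) = t²·φ₂(q,qt) − t²·q·φ₁(q,tq²). Then φ₂(q,t) = Σ_{j≥2, ℓ≥2} t^{ℓ+2j−4} · q^{(ℓ² + 2j² + 2ℓj − 5ℓ − 10j + 12)/2}, where all exponents of q occurring are nonnegative integers. -/

import Mathlib

/-- The monomial substitution `t ↦ t·q^j` on `ℤ[[q,t]]` (variables: `0 ↦ q`,
`1 ↦ t`): each monomial `q^a t^c` is replaced by `q^{a+jc} t^c`.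
Coefficientwise: the coefficient of `q^A t^C` in `substT j F` is the
coefficient of `q^{A-jC} t^C` in `F` when `jC ≤ A`, and `0` otherwise. -/
noncomputable def substT (j : ℕ) (F : MvPowerSeries (Fin 2) ℤ) :
    MvPowerSeries (Fin 2) ℤ :=
  fun d =>
    if j * d 1 ≤ d 0 then
      F (Finsupp.single 0 (d 0 - j * d 1) + Finsupp.single 1 (d 1))
    else 0

/-- `φ₁(q,t) = -Σ_{j≥0} t^j·q^{binomial(j,2)}`: the coefficient of `q^a t^j`
is `-1` if `a = binomial(j,2)` and `0` otherwise. -/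
noncomputable def phi1 : MvPowerSeries (Fin 2) ℤ :=
  fun d => if d 0 = Nat.choose (d 1) 2 then -1 else 0

noncomputable def D (a c : ℕ) : Fin 2 →₀ ℕ :=
  Finsupp.single 0 a + Finsupp.single 1 c

lemma D0 (a c : ℕ) : D a c 0 = a := by simp [D]
lemma D1 (a c : ℕ) : D a c 1 = c := by simp [D, Finsupp.single_apply]

lemma le_D_iff (a c b d : ℕ) : D b d ≤ D a c ↔ b ≤ a ∧ d ≤ c := by
  constructor
  · intro h
    exact ⟨by simpa [D0] using h 0, by simpa [D1] using h 1⟩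
  · intro ⟨h1, h2⟩ s
    fin_cases s <;> simp [D0, D1, h1, h2]

lemma D_sub (a c b d : ℕ) : D a c - D b d = D (a - b) (c - d) := by
  ext s
  fin_cases s <;> simp [Finsupp.tsub_apply, D0, D1]

lemma coeff_substT (j : ℕ) (F : MvPowerSeries (Fin 2) ℤ) (a c : ℕ) :
    MvPowerSeries.coeff (R := ℤ) (D a c) (substT j F) =
      if j * c ≤ a then MvPowerSeries.coeff (R := ℤ) (D (a - j * c) c) F else 0 := by
  rw [MvPowerSeries.coeff_apply, substT, MvPowerSeries.coeff_apply]
  simp only [D0, D1]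
  rfl

lemma sD02 : (Finsupp.single 1 2 : Fin 2 →₀ ℕ) = D 0 2 := by
  ext s; fin_cases s <;> simp [D0, D1, Finsupp.single_apply]

lemma sD12 : ((Finsupp.single 1 2 : Fin 2 →₀ ℕ) + Finsupp.single 0 1) = D 1 2 := by
  ext s; fin_cases s <;> simp [D0, D1, Finsupp.single_apply]

lemma X1sq : (MvPowerSeries.X 1 : MvPowerSeries (Fin 2) ℤ) ^ 2 =
    MvPowerSeries.monomial (R := ℤ) (D 0 2) 1 := by
  rw [MvPowerSeries.X_pow_eq, sD02]

lemma X1sqX0 : (MvPowerSeries.X 1 : MvPowerSeries (Fin 2) ℤ) ^ 2 * MvPowerSeries.X 0 =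
    MvPowerSeries.monomial (R := ℤ) (D 1 2) 1 := by
  rw [MvPowerSeries.X_pow_eq, MvPowerSeries.X, MvPowerSeries.monomial_mul_monomial,
    one_mul, sD12]

lemma recP (φ₂ : MvPowerSeries (Fin 2) ℤ)
    (hφ₂ : φ₂ = (MvPowerSeries.X 1) ^ 2 * substT 1 φ₂ -
      (MvPowerSeries.X 1) ^ 2 * (MvPowerSeries.X 0) * substT 2 phi1) (a c : ℕ) :
    MvPowerSeries.coeff (R := ℤ) (D a c) φ₂ =
      (if 2 ≤ c ∧ c - 2 ≤ a then MvPowerSeries.coeff (R := ℤ) (D (a - (c-2)) (c-2)) φ₂ else 0) +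
      (if 2 ≤ c ∧ 2*(c-2) < a ∧ a - 1 - 2*(c-2) = Nat.choose (c-2) 2 then 1 else 0) := by
  conv_lhs => rw [hφ₂]
  rw [map_sub, X1sqX0, X1sq, MvPowerSeries.coeff_monomial_mul,
    MvPowerSeries.coeff_monomial_mul]
  simp only [le_D_iff, D_sub, coeff_substT, one_mul]
  by_cases hc : 2 ≤ c
  · simp only [hc, true_and, Nat.le_zero, and_true, zero_le]
    have hp : ∀ x y : ℕ, MvPowerSeries.coeff (R := ℤ) (D x y) phi1 =
        if x = Nat.choose y 2 then -1 else 0 := by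
      intro x y
      rw [MvPowerSeries.coeff_apply]
      show (if (D x y) 0 = Nat.choose ((D x y) 1) 2 then (-1:ℤ) else 0) = _
      rw [D0, D1]
    simp only [if_true, Nat.sub_zero, hp]
    rw [sub_eq_add_neg]
    congr 1
    split_ifs <;> simp_all <;> omega
  · simp [hc]

def Nc (a c : ℕ) : ℕ :=
  ((Finset.Icc 2 (c + 4) ×ˢ Finset.Icc 2 (c + 4)).filter
    (fun p : ℕ × ℕ =>
      p.2 + 2 * p.1 = c + 4 ∧
      p.2 ^ 2 + 2 * p.1 ^ 2 + 2 * p.2 * p.1 + 12 =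
        2 * a + 5 * p.2 + 10 * p.1)).card

lemma Nc_base (a : ℕ) (c : ℕ) (hc : c < 2) : Nc a c = 0 := by
  rw [Nc, Finset.card_eq_zero, Finset.filter_eq_empty_iff]
  rintro ⟨j, l⟩ hm
  simp only [Finset.mem_product, Finset.mem_Icc] at hm
  simp only [not_and]
  intro h1
  exfalso
  omega

lemma Nc_step (a c : ℕ) :
    Nc a (c + 2) = (if c ≤ a then Nc (a - c) c else 0) +
      (if 2 * a = (c + 1) * (c + 2) then 1 else 0) := by
  classical
  rw [Nc]
  rw [← Finset.card_filter_add_card_filter_not (fun p : ℕ × ℕ => p.1 = 2), add_comm]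
  congr 1
  · -- main part p.1 ≠ 2
    by_cases hca : c ≤ a
    · rw [if_pos hca, Nc]
      apply Finset.card_nbij' (fun p : ℕ × ℕ => (p.1 - 1, p.2))
        (fun p : ℕ × ℕ => (p.1 + 1, p.2))
      · rintro ⟨j, l⟩ hm
        simp only [Finset.mem_coe, Finset.mem_filter, Finset.mem_product, Finset.mem_Icc] at hm ⊢
        obtain ⟨⟨⟨⟨hj1, hj2⟩, hl1, hl2⟩, h1, h2⟩, h3⟩ := hm
        obtain ⟨k, rfl⟩ : ∃ k, j = k + 3 := ⟨j - 3, by omega⟩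
        rw [show k + 3 - 1 = k + 2 from rfl]
        refine ⟨⟨⟨by omega, by omega⟩, by omega, by omega⟩, by omega, ?_⟩
        have h1z : (l : ℤ) + 2 * k = c := by
          have : l + 2 * k = c := by omega
          exact_mod_cast this
        zify [hca] at h2 ⊢
        linear_combination h2 - 2 * h1z
      · rintro ⟨j, l⟩ hm
        simp only [Finset.mem_coe, Finset.mem_filter, Finset.mem_product, Finset.mem_Icc] at hm ⊢
        obtain ⟨⟨⟨hj1, hj2⟩, hl1, hl2⟩, h1, h2⟩ := hm
        have h1z : (l : ℤ) + 2 * j = c + 4 := by exact_mod_cast h1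
        refine ⟨⟨⟨⟨by omega, by omega⟩, by omega, by omega⟩, by omega, ?_⟩, by omega⟩
        zify [hca] at h2 ⊢
        linear_combination h2 + 2 * h1z
      · rintro ⟨j, l⟩ hm
        simp only [Finset.mem_coe, Finset.mem_filter, Finset.mem_product, Finset.mem_Icc] at hm
        have hj1 : 1 ≤ j := by omega
        show ((j - 1 + 1 : ℕ), l) = (j, l)
        rw [Nat.sub_add_cancel hj1]
      · rintro ⟨j, l⟩ _
        show ((j + 1 - 1 : ℕ), l) = (j, l)
        rw [Nat.add_sub_cancel]
    · rw [if_neg hca, Finset.card_eq_zero, Finset.filter_eq_empty_iff]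
      rintro ⟨j, l⟩ hm
      simp only [Finset.mem_filter, Finset.mem_product, Finset.mem_Icc] at hm
      obtain ⟨⟨⟨hj1, hj2⟩, hl1, hl2⟩, h1, h2⟩ := hm
      simp only [not_not]
      by_contra hne
      have hj3 : 3 ≤ j := by omega
      apply hca
      have h2z : (l : ℤ) ^ 2 + 2 * (j : ℤ) ^ 2 + 2 * l * j + 12 =
          2 * a + 5 * l + 10 * j := by exact_mod_cast h2
      have h1z : (l : ℤ) + 2 * j = c + 6 := by exact_mod_cast h1
      have hlz : (2 : ℤ) ≤ l := by exact_mod_cast hl1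
      have hjz : (3 : ℤ) ≤ j := by exact_mod_cast hj3
      have : (c : ℤ) ≤ a := by
        nlinarith [sq_nonneg (2 * (j : ℤ) - 7), mul_nonneg (by linarith : (0:ℤ) ≤ (l:ℤ))
          (by linarith : (0:ℤ) ≤ (l : ℤ) + 2 * j - 7)]
      exact_mod_cast this
  · -- boundary part p.1 = 2
    by_cases h : 2 * a = (c + 1) * (c + 2)
    · rw [if_pos h, Finset.card_eq_one]
      refine ⟨(2, c + 2), ?_⟩
      ext ⟨j, l⟩
      simp only [Finset.mem_filter, Finset.mem_product, Finset.mem_Icc,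
        Finset.mem_singleton, Prod.mk.injEq]
      constructor
      · rintro ⟨⟨⟨⟨hj1, hj2⟩, hl1, hl2⟩, h1, h2⟩, rfl⟩
        exact ⟨rfl, by omega⟩
      · rintro ⟨rfl, rfl⟩
        refine ⟨⟨⟨⟨by omega, by omega⟩, by omega, by omega⟩, by omega, ?_⟩, rfl⟩
        nlinarith [h]
    · rw [if_neg h, Finset.card_eq_zero, Finset.filter_eq_empty_iff]
      rintro ⟨j, l⟩ hm
      simp only [Finset.mem_filter, Finset.mem_product, Finset.mem_Icc] at hm
      obtain ⟨⟨⟨hj1, hj2⟩, hl1, hl2⟩, h1, h2⟩ := hm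
      intro hj
      subst hj
      apply h
      have hl : l = c + 2 := by omega
      subst hl
      nlinarith [h2]

lemma indicator_iff (a k : ℕ) :
    (2 * k < a ∧ a - 1 - 2 * k = Nat.choose k 2) ↔ 2 * a = (k + 1) * (k + 2) := by
  set C := Nat.choose k 2 with hC
  have hdvd : 2 ∣ k * (k - 1) := by
    rcases Nat.eq_zero_or_pos k with rfl | hk
    · simp
    · obtain ⟨m, rfl⟩ : ∃ m, k = m + 1 := ⟨k - 1, by omega⟩
      simp only [Nat.add_sub_cancel]
      have : Even ((m + 1) * m) := by rw [mul_comm]; exact Nat.even_mul_succ_self m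
      exact this.two_dvd
  have hch : 2 * C = k * (k - 1) := by
    rw [hC, Nat.choose_two_right, Nat.mul_div_cancel' hdvd]
  have hq : (k + 1) * (k + 2) = k * (k - 1) + 4 * k + 2 := by
    rcases Nat.eq_zero_or_pos k with rfl | hk
    · rfl
    · obtain ⟨m, rfl⟩ : ∃ m, k = m + 1 := ⟨k - 1, by omega⟩
      simp only [Nat.add_sub_cancel]
      ring
  constructor
  · rintro ⟨h1, h2⟩
    calc 2 * a = 2 * C + 4 * k + 2 := by omega
    _ = k * (k - 1) + 4 * k + 2 := by rw [hch]
    _ = (k + 1) * (k + 2) := hq.symm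
  · intro h
    have h4 : 2 * a = 2 * C + 4 * k + 2 := by rw [h, hq, ← hch]
    omega

lemma coeff_eq (φ₂ : MvPowerSeries (Fin 2) ℤ)
    (hφ₂ : φ₂ = (MvPowerSeries.X 1) ^ 2 * substT 1 φ₂ -
      (MvPowerSeries.X 1) ^ 2 * (MvPowerSeries.X 0) * substT 2 phi1) :
    ∀ c a : ℕ, MvPowerSeries.coeff (R := ℤ) (D a c) φ₂ = Nc a c := by
  intro c
  induction c using Nat.strong_induction_on with
  | _ c ih =>
    intro a
    match c, ih with
    | 0, _ => rw [recP φ₂ hφ₂]; simp [Nc_base a 0 (by omega)]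
    | 1, _ => rw [recP φ₂ hφ₂]; simp [Nc_base a 1 (by omega)]
    | (k+2), ih =>
      rw [recP φ₂ hφ₂, Nc_step, Nat.cast_add]
      simp only [show k + 2 - 2 = k from rfl]
      push_cast
      congr 1
      · by_cases h : k ≤ a
        · rw [if_pos (by simpa using h), if_pos h, ih k (by omega)]
        · rw [if_neg (by simpa using h), if_neg h]
      · by_cases h : 2 * a = (k + 1) * (k + 2)
        · rw [if_pos (by simpa using (indicator_iff a k).mpr h), if_pos h]
        · rw [if_neg (by simpa using fun hh => h ((indicator_iff a k).mp hh)), if_neg h]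

/-- Let `φ₁(q,t) = -Σ_{j≥0} t^j q^{binomial(j,2)}` and let
`φ₂(q,t) ∈ ℤ[[q,t]]` satisfy `φ₂(q,t) = t²·φ₂(q,qt) - t²·q·φ₁(q,tq²)` (which
determines `φ₂` uniquely).  Then
`φ₂(q,t) = Σ_{j,ℓ≥2} t^{ℓ+2j-4} · q^{(ℓ²+2j²+2ℓj-5ℓ-10j+12)/2}`:
all exponents of `q` occurring are nonnegative integers (first conjunct, with
the division by `2` cleared), and the coefficient of `q^a t^c` in `φ₂` is the
number of pairs `(j,ℓ)` with `j,ℓ ≥ 2`, `ℓ+2j-4 = c` and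
`(ℓ²+2j²+2ℓj-5ℓ-10j+12)/2 = a` (second conjunct, again with denominators
cleared; all such pairs satisfy `j,ℓ ≤ c+4`). -/
theorem stmt13 (φ₂ : MvPowerSeries (Fin 2) ℤ)
    (hφ₂ : φ₂ = (MvPowerSeries.X 1) ^ 2 * substT 1 φ₂ -
      (MvPowerSeries.X 1) ^ 2 * (MvPowerSeries.X 0) * substT 2 phi1) :
    (∀ j ℓ : ℕ, 2 ≤ j → 2 ≤ ℓ →
      ∃ e : ℕ, ℓ ^ 2 + 2 * j ^ 2 + 2 * ℓ * j + 12 = 2 * e + 5 * ℓ + 10 * j) ∧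
    (∀ a c : ℕ,
      MvPowerSeries.coeff (R := ℤ) (Finsupp.single 0 a + Finsupp.single 1 c) φ₂ =
        ((Finset.Icc 2 (c + 4) ×ˢ Finset.Icc 2 (c + 4)).filter
          (fun p : ℕ × ℕ =>
            p.2 + 2 * p.1 = c + 4 ∧
            p.2 ^ 2 + 2 * p.1 ^ 2 + 2 * p.2 * p.1 + 12 =
              2 * a + 5 * p.2 + 10 * p.1)).card) := by

  constructor
  · intro j l hj hl
    obtain ⟨k, rfl⟩ : ∃ k, j = k + 2 := ⟨j - 2, by omega⟩
    obtain ⟨m, rfl⟩ : ∃ m, l = m + 2 := ⟨l - 2, by omega⟩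
    obtain ⟨t, ht⟩ := Nat.even_mul_succ_self m
    exact ⟨t + m + k ^ 2 + m * k + k + 1, by nlinarith [ht]⟩
  · intro a c
    have := coeff_eq φ₂ hφ₂ c a
    rw [show Finsupp.single (0 : Fin 2) a + Finsupp.single 1 c = D a c from rfl, this]
    rfl
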